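/- Let H ∈ (0, 1/2), let q ≥ 1 be an integer, and define R_H(s,t) = (1/2)·( s^{2H} + t^{2H} − |t−s|^{2H} ) for s,t ≥ 0. For integers n ≥ 1 and j,k ∈ {0,…,n−1} set ρ^{(n)}_{j,k} = R_H((j+1)/n,(k+1)/n) − R_H((j+1)/n,k/n) − R_H(j/n,(k+1)/n) + R_H(j/n,k/n). Then there exists a constant C_{H,q} > 0, depending only on H and q, such that for every integer n ≥ 1: Σ_{j=0}^{n−1} Σ_{k=0}^{n−1} | ρ^{(n)}_{j,k} |^q ≤ C_{H,q} · n^{1−2qH}. -/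

import Mathlib

/-- Covariance function of fractional Brownian motion with Hurst parameter `H`. -/
noncomputable def fbmCov (H : ℝ) (s t : ℝ) : ℝ :=
  (1 / 2) * (s ^ (2 * H) + t ^ (2 * H) - |t - s| ^ (2 * H))

/-- Covariance of the increments `B_{(j+1)/n} − B_{j/n}` and `B_{(k+1)/n} − B_{k/n}`. -/
noncomputable def incCov (H : ℝ) (n j k : ℕ) : ℝ :=
  fbmCov H ((j + 1 : ℝ) / n) ((k + 1 : ℝ) / n) - fbmCov H ((j + 1 : ℝ) / n) ((k : ℝ) / n)
    - fbmCov H ((j : ℝ) / n) ((k + 1 : ℝ) / n) + fbmCov H ((j : ℝ) / n) ((k : ℝ) / n)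

/-!
By self-similarity `ρ^{(n)}_{j,k} = n^{-2H} ρ(|j - k|)`, where `ρ` is the autocovariance of
fractional Gaussian noise. For a lag `d ≥ 1`, `ρ(d) = (a_d - a_{d-1}) / 2` with
`a_i = (i + 1)^{2H} - i^{2H}`, and since `x ↦ x^{2H}` is concave for `H ≤ 1/2` the sequence `a`
decreases from `a_0 = 1` and stays nonnegative. So `|ρ(d)| ≤ 1`, hence `|ρ(d)|^q ≤ |ρ(d)|`, and
`∑_{d ≥ 1} |ρ(d)|` telescopes to at most `1/2`. Every row `j` of the double sum is then at most
`ρ(0) + 2 · 1/2 = 2`, and the whole sum at most `2 n · n^{-2qH}`.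
-/

open Finset

theorem sum_range_natDist_eq {M : Type*} [AddCommMonoid M] (g : ℕ → M) {j n : ℕ} (hj : j < n) :
    ∑ k ∈ range n, g (Nat.dist j k)
      = ∑ i ∈ range j, g (i + 1) + g 0 + ∑ i ∈ range (n - (j + 1)), g (i + 1) := by
  obtain ⟨m, rfl⟩ : ∃ m, n = j + 1 + m := ⟨n - (j + 1), by omega⟩
  rw [sum_range_add, sum_range_succ, ← sum_range_reflect, Nat.dist_self, Nat.add_sub_cancel_left]
  congr 2
  · refine sum_congr rfl fun i hi => congrArg g ?_
    rw [mem_range] at hi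
    rw [Nat.dist_eq_sub_of_le_right] <;> omega
  · funext i
    congr 1
    rw [Nat.dist_eq_sub_of_le] <;> omega

noncomputable def fgnCov (H x : ℝ) : ℝ :=
  (1 / 2) * (|x + 1| ^ (2 * H) + |x - 1| ^ (2 * H) - 2 * |x| ^ (2 * H))

noncomputable def varIncr (H : ℝ) (i : ℕ) : ℝ :=
  ((i : ℝ) + 1) ^ (2 * H) - (i : ℝ) ^ (2 * H)

theorem fbmCov_div (H : ℝ) {c s t : ℝ} (hc : 0 < c) (hs : 0 ≤ s) (ht : 0 ≤ t) :
    fbmCov H (s / c) (t / c) = c ^ (-(2 * H)) * fbmCov H s t := by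
  rw [fbmCov, fbmCov, ← sub_div, abs_div, abs_of_pos hc, Real.div_rpow hs hc.le,
    Real.div_rpow ht hc.le, Real.div_rpow (abs_nonneg _) hc.le, Real.rpow_neg hc.le]
  ring

theorem fbmCov_rect_eq_fgnCov (H u v : ℝ) :
    fbmCov H (u + 1) (v + 1) - fbmCov H (u + 1) v - fbmCov H u (v + 1) + fbmCov H u v
      = fgnCov H (v - u) := by
  rw [fbmCov, fbmCov, fbmCov, fbmCov, fgnCov, show v + 1 - (u + 1) = v - u by ring,
    show v - (u + 1) = v - u - 1 by ring, show v + 1 - u = v - u + 1 by ring]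
  ring

theorem fgnCov_neg (H x : ℝ) : fgnCov H (-x) = fgnCov H x := by
  rw [fgnCov, fgnCov, abs_neg, show -x + 1 = -(x - 1) by ring, show -x - 1 = -(x + 1) by ring,
    abs_neg, abs_neg]
  ring

theorem fgnCov_natCast_sub (H : ℝ) (j k : ℕ) :
    fgnCov H ((k : ℝ) - j) = fgnCov H (Nat.dist j k) := by
  rcases le_total j k with h | h
  · rw [Nat.dist_eq_sub_of_le h, Nat.cast_sub h]
  · rw [Nat.dist_eq_sub_of_le_right h, Nat.cast_sub h, ← fgnCov_neg, neg_sub]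

theorem incCov_eq_fgnCov (H : ℝ) {n : ℕ} (hn : 0 < n) (j k : ℕ) :
    incCov H n j k = (n : ℝ) ^ (-(2 * H)) * fgnCov H (Nat.dist j k) := by
  have hn' : (0 : ℝ) < n := Nat.cast_pos.2 hn
  simp only [incCov, fbmCov_div H hn' (Nat.cast_nonneg _) (Nat.cast_nonneg _),
    fbmCov_div H hn' (Nat.cast_add_one_pos _).le (Nat.cast_add_one_pos _).le,
    fbmCov_div H hn' (Nat.cast_nonneg _) (Nat.cast_add_one_pos _).le,
    fbmCov_div H hn' (Nat.cast_add_one_pos _).le (Nat.cast_nonneg _),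
    ← fgnCov_natCast_sub, ← fbmCov_rect_eq_fgnCov]
  ring

theorem fgnCov_natCast_succ (H : ℝ) (i : ℕ) :
    fgnCov H ((i + 1 : ℕ) : ℝ) = (varIncr H (i + 1) - varIncr H i) / 2 := by
  rw [fgnCov, varIncr, varIncr, Nat.cast_add_one, add_sub_cancel_right,
    abs_of_nonneg (by positivity), abs_of_nonneg (by positivity), abs_of_nonneg (by positivity)]
  ring

section

variable {H : ℝ}

theorem fgnCov_zero (hH : H ≠ 0) : fgnCov H 0 = 1 := by
  norm_num [fgnCov, Real.zero_rpow (mul_ne_zero two_ne_zero hH)]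

theorem varIncr_nonneg (hH : 0 ≤ H) (i : ℕ) : 0 ≤ varIncr H i :=
  sub_nonneg.2 (Real.rpow_le_rpow (Nat.cast_nonneg i) (by linarith) (by linarith))

theorem varIncr_antitone (hH₀ : 0 ≤ H) (hH₁ : H ≤ 1 / 2) : Antitone (varIncr H) := by
  refine antitone_nat_of_succ_le fun i => ?_
  have hconc := (Real.concaveOn_rpow (p := 2 * H) (by linarith) (by linarith)).2
    (Set.mem_Ici.2 (Nat.cast_nonneg i)) (Set.mem_Ici.2 (by positivity : (0 : ℝ) ≤ i + 2))
    (by norm_num : (0 : ℝ) ≤ 1 / 2) (by norm_num : (0 : ℝ) ≤ 1 / 2) (by norm_num)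
  simp only [smul_eq_mul] at hconc
  rw [show (1 / 2 : ℝ) * i + 1 / 2 * (i + 2) = i + 1 by ring] at hconc
  rw [varIncr, varIncr, Nat.cast_add_one, add_assoc, one_add_one_eq_two]
  linarith

theorem varIncr_le_one (hH₀ : 0 ≤ H) (hH₁ : H ≤ 1 / 2) (i : ℕ) : varIncr H i ≤ 1 :=
  calc varIncr H i ≤ varIncr H 0 := varIncr_antitone hH₀ hH₁ (Nat.zero_le i)
    _ ≤ 1 := by simpa [varIncr] using Real.rpow_nonneg le_rfl (2 * H)

theorem abs_fgnCov_natCast_succ (hH₀ : 0 ≤ H) (hH₁ : H ≤ 1 / 2) (i : ℕ) :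
    |fgnCov H ((i + 1 : ℕ) : ℝ)| = (varIncr H i - varIncr H (i + 1)) / 2 := by
  rw [fgnCov_natCast_succ, abs_of_nonpos, ← neg_div, neg_sub]
  linarith [varIncr_antitone hH₀ hH₁ (Nat.le_succ i)]

theorem sum_range_abs_fgnCov_succ_pow_le (hH₀ : 0 ≤ H) (hH₁ : H ≤ 1 / 2) {q : ℕ} (hq : q ≠ 0)
    (m : ℕ) : ∑ i ∈ range m, |fgnCov H ((i + 1 : ℕ) : ℝ)| ^ q ≤ 1 / 2 := by
  have habs_le_one (i : ℕ) : |fgnCov H ((i + 1 : ℕ) : ℝ)| ≤ 1 := by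
    rw [abs_fgnCov_natCast_succ hH₀ hH₁]
    linarith [varIncr_le_one hH₀ hH₁ i, varIncr_nonneg hH₀ (i + 1)]
  calc ∑ i ∈ range m, |fgnCov H ((i + 1 : ℕ) : ℝ)| ^ q
      ≤ ∑ i ∈ range m, |fgnCov H ((i + 1 : ℕ) : ℝ)| :=
        sum_le_sum fun i _ => pow_le_of_le_one (abs_nonneg _) (habs_le_one i) hq
    _ = (varIncr H 0 - varIncr H m) / 2 := by
        simp only [abs_fgnCov_natCast_succ hH₀ hH₁, ← sum_div, sum_range_sub']
    _ ≤ 1 / 2 := by linarith [varIncr_le_one hH₀ hH₁ 0, varIncr_nonneg hH₀ m]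

theorem sum_range_abs_fgnCov_natDist_pow_le (hH₀ : 0 < H) (hH₁ : H ≤ 1 / 2) {q : ℕ}
    (hq : q ≠ 0) {j n : ℕ} (hj : j < n) :
    ∑ k ∈ range n, |fgnCov H (Nat.dist j k)| ^ q ≤ 2 := by
  rw [sum_range_natDist_eq (fun d => |fgnCov H d| ^ q) hj, Nat.cast_zero, fgnCov_zero hH₀.ne',
    abs_one, one_pow]
  linarith [sum_range_abs_fgnCov_succ_pow_le hH₀.le hH₁ hq j,
    sum_range_abs_fgnCov_succ_pow_le hH₀.le hH₁ hq (n - (j + 1))]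

end

theorem fbm_increment_covariance_power_sum_bound
    (H : ℝ) (hH : H ∈ Set.Ioo (0 : ℝ) (1 / 2)) (q : ℕ) (hq : 1 ≤ q) :
    ∃ C : ℝ, 0 < C ∧ ∀ n : ℕ, 1 ≤ n →
      ∑ j ∈ Finset.range n, ∑ k ∈ Finset.range n, |incCov H n j k| ^ q
        ≤ C * (n : ℝ) ^ (1 - 2 * q * H : ℝ) := by
  refine ⟨2, two_pos, fun n hn => ?_⟩
  have hn' : (0 : ℝ) < n := Nat.cast_pos.2 hn
  have hscale : 0 ≤ (n : ℝ) ^ (-(2 * H)) := Real.rpow_nonneg hn'.le _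
  calc ∑ j ∈ range n, ∑ k ∈ range n, |incCov H n j k| ^ q
      = ∑ j ∈ range n, ((n : ℝ) ^ (-(2 * H))) ^ q
          * ∑ k ∈ range n, |fgnCov H (Nat.dist j k)| ^ q := by
        simp only [incCov_eq_fgnCov H hn, abs_mul, abs_of_nonneg hscale, mul_pow, mul_sum]
    _ ≤ ∑ j ∈ range n, ((n : ℝ) ^ (-(2 * H))) ^ q * 2 :=
        sum_le_sum fun j hj => mul_le_mul_of_nonneg_left
          (sum_range_abs_fgnCov_natDist_pow_le hH.1 hH.2.le (by omega) (mem_range.1 hj))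
          (pow_nonneg hscale q)
    _ = 2 * (n : ℝ) ^ (1 - 2 * q * H : ℝ) := by
        rw [sum_const, card_range, nsmul_eq_mul, ← Real.rpow_mul_natCast hn'.le,
          show (1 - 2 * q * H : ℝ) = -(2 * H) * q + 1 by ring, Real.rpow_add_one hn'.ne']
        ring
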